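/- arXiv:1806.05044 — 2 statements merged into one kernel-verified Lean document; each statement's English description precedes it below -/
import Mathlib

section
/- Let A = K[[f_1,…,f_s]] ⊆ F = K[[x_1,…,x_n]] and a ∈ (ℝ_{>0})^n. If {g_1,…,g_r} and {g'_1,…,g'_t} are both a-reduced canonical bases of A, then {g_1,…,g_r} = {g'_1,…,g'_t} as subsets of F (in particular r = t); that is, the a-reduced canonical basis of A, if it exists, is unique. -/
/-!
For a reduced basis the leading monomials are the monic monomials `x^β`, `β ∈ B`, and a monomial
`x^γ` lies in `K[[x^β : β ∈ B]]` exactly when `γ` lies in the monoid generated by `B` (coefficients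
of degree `< N` survive modulo `𝔪^N`). Minimality makes `B` the set of indecomposable elements of
that monoid, which depends only on `M(A,a)`, so two reduced bases have the same leading exponents.
If `g ≠ g'` share their leading exponent, the leading exponent `α` of `g - g' ∈ A` differs from it
because the monic leading terms cancel; then `x^α ∈ M(A,a)` occurs in `g` or `g'` outside the
leading term, contradicting reducedness.
-/

noncomputable section

namespace CanonicalFan

open MvPowerSeries

variable (K : Type*) [Field K] (n : ℕ)

/-- The weight `⟨a, α⟩ = ∑ i, a i * α i` of an exponent `α` with respect to `a`. -/
def weight (a : Fin n → ℝ) (α : Fin n →₀ ℕ) : ℝ := ∑ i, a i * (α i : ℝ)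

/-- The support of a formal power series. -/
def supp (f : MvPowerSeries (Fin n) K) : Set (Fin n →₀ ℕ) :=
  {α | MvPowerSeries.coeff α f ≠ 0}

/-- The `a`-valuation `ν(f,a)`, with the convention `ν(0,a) = +∞`. -/
def nu (a : Fin n → ℝ) (f : MvPowerSeries (Fin n) K) : EReal :=
  sInf ((fun α => ((weight n a α : ℝ) : EReal)) '' supp K n f)

open Classical in
/-- The `a`-initial form `in(f,a)` of a power series. -/
def initialForm (a : Fin n → ℝ) (f : MvPowerSeries (Fin n) K) :
    MvPowerSeries (Fin n) K :=
  fun α => if ((weight n a α : ℝ) : EReal) = nu K n a f then MvPowerSeries.coeff α f else 0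

open Classical in
/-- `exp(f,a)`: the `≺`-maximal element of the support of `in(f,a)`, where `≺` is the
well-ordering `r` (junk value `0` if no maximal element exists). -/
def exponent (r : (Fin n →₀ ℕ) → (Fin n →₀ ℕ) → Prop) (a : Fin n → ℝ)
    (f : MvPowerSeries (Fin n) K) : Fin n →₀ ℕ :=
  if h : ∃ β ∈ supp K n (initialForm K n a f),
      ∀ γ ∈ supp K n (initialForm K n a f), γ = β ∨ r γ β
  then h.choose else 0

/-- The `a`-leading monomial `M(f,a) = c_{exp(f,a)} x^{exp(f,a)}`. -/
def leadMon (r : (Fin n →₀ ℕ) → (Fin n →₀ ℕ) → Prop) (a : Fin n → ℝ)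
    (f : MvPowerSeries (Fin n) K) : MvPowerSeries (Fin n) K :=
  MvPowerSeries.monomial (exponent K n r a f)
    (MvPowerSeries.coeff (exponent K n r a f) f)

/-- The maximal ideal `(x_1, …, x_n)` of `K[[x_1,…,x_n]]`. -/
def mIdeal : Ideal (MvPowerSeries (Fin n) K) :=
  Ideal.span (Set.range (MvPowerSeries.X : Fin n → MvPowerSeries (Fin n) K))

/-- `K[[S]]`: the smallest `K`-subalgebra of `K[[x_1,…,x_n]]` containing `S` and closed in
the `(x_1,…,x_n)`-adic topology; concretely, the adic closure of `Algebra.adjoin K S`. -/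
def closedAdjoin (S : Set (MvPowerSeries (Fin n) K)) :
    Subalgebra K (MvPowerSeries (Fin n) K) where
  carrier := {f | ∀ N : ℕ, ∃ g ∈ Algebra.adjoin K S, f - g ∈ (mIdeal K n) ^ N}
  algebraMap_mem' c N :=
    ⟨algebraMap K _ c, Subalgebra.algebraMap_mem _ c, by simp [Ideal.zero_mem]⟩
  add_mem' {f g} hf hg N := by
    obtain ⟨p, hp, hfp⟩ := hf N
    obtain ⟨q, hq, hgq⟩ := hg N
    exact ⟨p + q, add_mem hp hq, by simpa [add_sub_add_comm] using Ideal.add_mem _ hfp hgq⟩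
  mul_mem' {f g} hf hg N := by
    obtain ⟨p, hp, hfp⟩ := hf N
    obtain ⟨q, hq, hgq⟩ := hg N
    refine ⟨p * q, mul_mem hp hq, ?_⟩
    have h : f * g - p * q = f * (g - q) + (f - p) * q := by ring
    rw [h]
    exact Ideal.add_mem _ (Ideal.mul_mem_left _ _ hgq) (Ideal.mul_mem_right _ _ hfp)

/-- `exp(A,a) = {exp(f,a) : f ∈ A, f ≠ 0}`. -/
def expSet (r : (Fin n →₀ ℕ) → (Fin n →₀ ℕ) → Prop) (a : Fin n → ℝ)
    (A : Set (MvPowerSeries (Fin n) K)) : Set (Fin n →₀ ℕ) :=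
  {β | ∃ f ∈ A, f ≠ 0 ∧ exponent K n r a f = β}

/-- `in(A,a) = K[[in(f,a) : f ∈ A ∖ {0}]]`. -/
def inAlgebra (a : Fin n → ℝ) (A : Set (MvPowerSeries (Fin n) K)) :
    Subalgebra K (MvPowerSeries (Fin n) K) :=
  closedAdjoin K n {g | ∃ f ∈ A, f ≠ 0 ∧ initialForm K n a f = g}

/-- `M(A,a) = K[[M(f,a) : f ∈ A ∖ {0}]]`. -/
def leadAlgebra (r : (Fin n →₀ ℕ) → (Fin n →₀ ℕ) → Prop) (a : Fin n → ℝ)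
    (A : Set (MvPowerSeries (Fin n) K)) : Subalgebra K (MvPowerSeries (Fin n) K) :=
  closedAdjoin K n {g | ∃ f ∈ A, f ≠ 0 ∧ leadMon K n r a f = g}

set_option synthInstance.maxHeartbeats 1000000 in
/-- The length of `F/A` as an `A`-module is finite. -/
def FiniteColength (A : Subalgebra K (MvPowerSeries (Fin n) K)) : Prop :=
  IsFiniteLength A
    (MvPowerSeries (Fin n) K ⧸ LinearMap.range (Algebra.linearMap A (MvPowerSeries (Fin n) K)))

/-- `{g_1,…,g_r}` is an `a`-canonical basis of `A`. -/
def IsCanonicalBasis (r : (Fin n →₀ ℕ) → (Fin n →₀ ℕ) → Prop) (a : Fin n → ℝ)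
    (A : Subalgebra K (MvPowerSeries (Fin n) K)) {m : ℕ}
    (g : Fin m → MvPowerSeries (Fin n) K) : Prop :=
  (∀ i, g i ∈ A ∧ g i ≠ 0) ∧
    leadAlgebra K n r a (A : Set (MvPowerSeries (Fin n) K)) =
      closedAdjoin K n (Set.range fun i => leadMon K n r a (g i))

/-- `{g_1,…,g_r}` is a minimal `a`-canonical basis of `A`. -/
def IsMinimalCanonicalBasis (r : (Fin n →₀ ℕ) → (Fin n →₀ ℕ) → Prop) (a : Fin n → ℝ)
    (A : Subalgebra K (MvPowerSeries (Fin n) K)) {m : ℕ}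
    (g : Fin m → MvPowerSeries (Fin n) K) : Prop :=
  IsCanonicalBasis K n r a A g ∧
    ∀ T : Set (MvPowerSeries (Fin n) K),
      T ⊂ Set.range (fun i => leadMon K n r a (g i)) →
        closedAdjoin K n T ≠ leadAlgebra K n r a (A : Set (MvPowerSeries (Fin n) K))

/-- `{g_1,…,g_r}` is the `a`-reduced canonical basis of `A`. -/
def IsReducedCanonicalBasis (r : (Fin n →₀ ℕ) → (Fin n →₀ ℕ) → Prop) (a : Fin n → ℝ)
    (A : Subalgebra K (MvPowerSeries (Fin n) K)) {m : ℕ}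
    (g : Fin m → MvPowerSeries (Fin n) K) : Prop :=
  IsMinimalCanonicalBasis K n r a A g ∧
    (∀ i, MvPowerSeries.coeff (exponent K n r a (g i)) (g i) = 1) ∧
    ∀ i, ∀ α ∈ supp K n (g i - leadMon K n r a (g i)),
      (MvPowerSeries.monomial α (1 : K)) ∉
        closedAdjoin K n (Set.range fun j => leadMon K n r a (g j))

/-- A power series is a (nonzero) monomial. -/
def IsMonomial (g : MvPowerSeries (Fin n) K) : Prop :=
  ∃ (α : Fin n →₀ ℕ) (c : K), c ≠ 0 ∧ g = MvPowerSeries.monomial α c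

section Indecomposables

variable {M : Type*} [AddMonoid M]

def indecomposables (S : AddSubmonoid M) : Set M :=
  {μ | μ ∈ S ∧ μ ≠ 0 ∧ ∀ γ ∈ S, ∀ δ ∈ S, μ = γ + δ → γ = 0 ∨ δ = 0}

theorem indecomposables_closure_subset (B : Set M) :
    indecomposables (AddSubmonoid.closure B) ⊆ B := by
  rintro μ ⟨hμ, hμ0, hμirr⟩
  induction hμ using AddSubmonoid.closure_induction with
  | mem γ hγ => exact hγ
  | zero => exact absurd rfl hμ0
  | add γ δ hγ hδ ihγ ihδ =>
    rcases hμirr γ hγ δ hδ rfl with rfl | rfl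
    · simp only [zero_add] at hμ0 hμirr ⊢
      exact ihδ hμ0 hμirr
    · simp only [add_zero] at hμ0 hμirr ⊢
      exact ihγ hμ0 hμirr

end Indecomposables

section MonomialMonoids

variable {σ : Type*}

theorem mem_closure_sdiff_of_degree_lt {B : Set (σ →₀ ℕ)} {β μ : σ →₀ ℕ}
    (hμ : μ ∈ AddSubmonoid.closure B) (hd : μ.degree < β.degree) :
    μ ∈ AddSubmonoid.closure (B \ {β}) := by
  induction hμ using AddSubmonoid.closure_induction with
  | mem γ hγ => exact AddSubmonoid.subset_closure ⟨hγ, by rintro rfl; exact lt_irrefl _ hd⟩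
  | zero => exact zero_mem _
  | add γ δ _ _ ihγ ihδ =>
    rw [map_add] at hd
    exact add_mem (ihγ (by omega)) (ihδ (by omega))

theorem mem_indecomposables_closure {B : Set (σ →₀ ℕ)} {b : σ →₀ ℕ} (hb : b ∈ B)
    (hmin : b ∉ AddSubmonoid.closure (B \ {b})) :
    b ∈ indecomposables (AddSubmonoid.closure B) := by
  refine ⟨AddSubmonoid.subset_closure hb, fun h0 => hmin (h0 ▸ zero_mem _), ?_⟩
  intro γ hγ δ hδ hsum
  by_contra! hne
  have hδd : 0 < δ.degree := pos_iff_ne_zero.2 ((Finsupp.degree_eq_zero_iff δ).not.2 hne.2)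
  have hγd : 0 < γ.degree := pos_iff_ne_zero.2 ((Finsupp.degree_eq_zero_iff γ).not.2 hne.1)
  have hdeg : b.degree = γ.degree + δ.degree := by rw [hsum, map_add]
  have hsplit := add_mem (mem_closure_sdiff_of_degree_lt (β := b) hγ (by omega))
    (mem_closure_sdiff_of_degree_lt (β := b) hδ (by omega))
  exact hmin (hsum ▸ hsplit)

theorem eq_of_closure_eq_of_minimal {B C : Set (σ →₀ ℕ)}
    (hB : ∀ b ∈ B, b ∉ AddSubmonoid.closure (B \ {b}))
    (hC : ∀ c ∈ C, c ∉ AddSubmonoid.closure (C \ {c}))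
    (h : AddSubmonoid.closure B = AddSubmonoid.closure C) : B = C := by
  apply Set.Subset.antisymm
  · intro b hb
    exact indecomposables_closure_subset C (h ▸ mem_indecomposables_closure hb (hB b hb))
  · intro c hc
    exact indecomposables_closure_subset B (h ▸ mem_indecomposables_closure hc (hC c hc))

end MonomialMonoids

section MonomialSupport

variable (R : Type*) {σ : Type*} [CommSemiring R]

def supportedIn (M : AddSubmonoid (σ →₀ ℕ)) : Subalgebra R (MvPowerSeries σ R) where
  carrier := {f | ∀ α, coeff α f ≠ 0 → α ∈ M}
  algebraMap_mem' c α hα := by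
    classical
    rw [MvPowerSeries.algebraMap_apply, Algebra.algebraMap_self_apply, coeff_C] at hα
    split_ifs at hα with h
    · exact h ▸ M.zero_mem
    · exact absurd rfl hα
  add_mem' {f g} hf hg α hα := by
    rw [map_add] at hα
    by_cases h : coeff α f = 0
    · exact hg α (by simpa [h] using hα)
    · exact hf α h
  mul_mem' {f g} hf hg α hα := by
    classical
    rw [coeff_mul] at hα
    obtain ⟨p, hp, hne⟩ := Finset.exists_ne_zero_of_sum_ne_zero hα
    rw [Finset.HasAntidiagonal.mem_antidiagonal] at hp
    exact hp ▸ M.add_mem (hf _ (left_ne_zero_of_mul hne)) (hg _ (right_ne_zero_of_mul hne))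

variable {R} in
theorem monomial_one_injective [Nontrivial R] :
    Function.Injective (monomial · (1 : R) : (σ →₀ ℕ) → MvPowerSeries σ R) :=
  fun β γ h => by
    classical
    simpa [coeff_monomial] using congrArg (coeff β) h

end MonomialSupport

section AdicClosure

variable {K n}

theorem one_le_order_of_mem_mIdeal {f : MvPowerSeries (Fin n) K} (hf : f ∈ mIdeal K n) :
    1 ≤ f.order := by
  induction hf using Submodule.span_induction with
  | mem _ hx =>
    obtain ⟨i, rfl⟩ := hx
    rw [X_def, order_monomial_of_ne_zero one_ne_zero]
    simp
  | zero => simp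
  | add _ _ _ _ hf hg => exact (le_min hf hg).trans min_order_le_add
  | smul c _ _ hf => exact hf.trans (le_add_self.trans le_order_mul)

theorem natCast_le_order_of_mem_mIdeal_pow {N : ℕ} {f : MvPowerSeries (Fin n) K}
    (hf : f ∈ mIdeal K n ^ N) : (N : ℕ∞) ≤ f.order := by
  induction N generalizing f with
  | zero => simp
  | succ N ih =>
    rw [pow_succ] at hf
    refine Submodule.mul_induction_on hf (fun g hg h hh => ?_)
      (fun _ _ hf hg => (le_min hf hg).trans min_order_le_add)
    calc ((N + 1 : ℕ) : ℕ∞) ≤ g.order + h.order := by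
          push_cast; exact add_le_add (ih hg) (one_le_order_of_mem_mIdeal hh)
      _ ≤ (g * h).order := le_order_mul

theorem coeff_eq_of_sub_mem_mIdeal_pow {N : ℕ} {f g : MvPowerSeries (Fin n) K}
    (hfg : f - g ∈ mIdeal K n ^ N) {α : Fin n →₀ ℕ} (hα : α.degree < N) :
    coeff α f = coeff α g := by
  rw [← sub_eq_zero, ← map_sub]
  exact coeff_of_lt_order ((Nat.cast_lt.2 hα).trans_le (natCast_le_order_of_mem_mIdeal_pow hfg))

theorem closedAdjoin_le {S T : Set (MvPowerSeries (Fin n) K)}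
    (h : S ⊆ closedAdjoin K n T) : closedAdjoin K n S ≤ closedAdjoin K n T := by
  intro f hf N
  obtain ⟨g, hg, hfg⟩ := hf N
  obtain ⟨h, hh, hgh⟩ := Algebra.adjoin_le h hg N
  exact ⟨h, hh, by simpa using add_mem hfg hgh⟩

theorem subset_closedAdjoin (S : Set (MvPowerSeries (Fin n) K)) : S ⊆ closedAdjoin K n S :=
  fun f hf N => ⟨f, Algebra.subset_adjoin hf, by simp⟩

theorem closedAdjoin_le_supportedIn {S : Set (MvPowerSeries (Fin n) K)}
    {M : AddSubmonoid (Fin n →₀ ℕ)} (h : S ⊆ supportedIn K M) :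
    closedAdjoin K n S ≤ supportedIn K M := by
  intro f hf α hα
  obtain ⟨g, hg, hfg⟩ := hf (α.degree + 1)
  rw [coeff_eq_of_sub_mem_mIdeal_pow hfg (Nat.lt_succ_self _)] at hα
  exact Algebra.adjoin_le h hg α hα

theorem monomial_one_mem_closedAdjoin_iff {B : Set (Fin n →₀ ℕ)} {γ : Fin n →₀ ℕ} :
    monomial γ (1 : K) ∈ closedAdjoin K n ((monomial · (1 : K)) '' B) ↔
      γ ∈ AddSubmonoid.closure B := by
  constructor
  · intro h
    refine closedAdjoin_le_supportedIn ?_ h γ (by simp)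
    rintro _ ⟨β, hβ, rfl⟩ α hα
    rw [coeff_monomial] at hα
    split_ifs at hα with hαβ
    · exact hαβ ▸ AddSubmonoid.subset_closure hβ
    · exact absurd rfl hα
  · intro h
    induction h using AddSubmonoid.closure_induction with
    | mem β hβ => exact subset_closedAdjoin _ ⟨β, hβ, rfl⟩
    | zero => simp
    | add β δ _ _ hβ hδ => simpa [monomial_mul_monomial] using mul_mem hβ hδ

theorem closedAdjoin_monomials_le_iff {B C : Set (Fin n →₀ ℕ)} :
    closedAdjoin K n ((monomial · (1 : K)) '' B) ≤ closedAdjoin K n ((monomial · (1 : K)) '' C) ↔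
      AddSubmonoid.closure B ≤ AddSubmonoid.closure C := by
  constructor
  · intro h γ hγ
    exact monomial_one_mem_closedAdjoin_iff.1 (h (monomial_one_mem_closedAdjoin_iff.2 hγ))
  · intro h
    apply closedAdjoin_le
    rintro _ ⟨β, hβ, rfl⟩
    exact monomial_one_mem_closedAdjoin_iff.2 (h (AddSubmonoid.subset_closure hβ))

end AdicClosure

section LeadingExponent

variable {K n} {a : Fin n → ℝ}

theorem finite_setOf_weight_le (ha : ∀ i, 0 < a i) (C : ℝ) :
    {α : Fin n →₀ ℕ | weight n a α ≤ C}.Finite := by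
  refine (Set.finite_Iic (Finsupp.equivFunOnFinite.symm fun i => ⌊C / a i⌋₊)).subset ?_
  intro α hα i
  have hterm : a i * α i ≤ C :=
    (Finset.single_le_sum (fun j _ => mul_nonneg (ha j).le (Nat.cast_nonneg (α j)))
      (Finset.mem_univ i)).trans hα
  simpa using Nat.le_floor ((le_div_iff₀ (ha i)).2 (by linarith))

theorem exists_weight_minimal_mem_supp (ha : ∀ i, 0 < a i) {f : MvPowerSeries (Fin n) K}
    (hf : f ≠ 0) : ∃ α ∈ supp K n f, ∀ β ∈ supp K n f, weight n a α ≤ weight n a β := by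
  obtain ⟨α₀, hα₀⟩ := (ne_zero_iff_exists_coeff_ne_zero f).1 hf
  obtain ⟨α, ⟨hα, hαα₀⟩, hmin⟩ := Set.exists_min_image
    {β ∈ supp K n f | weight n a β ≤ weight n a α₀} (weight n a)
    ((finite_setOf_weight_le ha _).subset fun β hβ => hβ.2) ⟨α₀, hα₀, le_rfl⟩
  refine ⟨α, hα, fun β hβ => ?_⟩
  by_cases hβα₀ : weight n a β ≤ weight n a α₀
  · exact hmin β ⟨hβ, hβα₀⟩
  · exact hαα₀.trans (le_of_not_ge hβα₀)

theorem supp_initialForm (a : Fin n → ℝ) (f : MvPowerSeries (Fin n) K) :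
    supp K n (initialForm K n a f) =
      {α ∈ supp K n f | ((weight n a α : ℝ) : EReal) = nu K n a f} := by
  ext α
  simp only [supp, initialForm, Set.mem_ofPred_eq, coeff_apply]
  split_ifs with h <;> simp [h]

theorem supp_initialForm_finite_nonempty (ha : ∀ i, 0 < a i) {f : MvPowerSeries (Fin n) K}
    (hf : f ≠ 0) :
    (supp K n (initialForm K n a f)).Finite ∧ (supp K n (initialForm K n a f)).Nonempty := by
  obtain ⟨α, hα, hmin⟩ := exists_weight_minimal_mem_supp ha hf
  have hnu : nu K n a f = weight n a α :=
    le_antisymm (sInf_le ⟨α, hα, rfl⟩)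
      (le_sInf fun _ ⟨β, hβ, hβw⟩ => hβw ▸ EReal.coe_le_coe_iff.2 (hmin β hβ))
  rw [supp_initialForm, hnu]
  refine ⟨(finite_setOf_weight_le ha (weight n a α)).subset fun β hβ => ?_, α, hα, rfl⟩
  exact (EReal.coe_eq_coe_iff.1 hβ.2).le

variable {r : (Fin n →₀ ℕ) → (Fin n →₀ ℕ) → Prop} [IsStrictTotalOrder (Fin n →₀ ℕ) r]

theorem coeff_exponent_ne_zero (ha : ∀ i, 0 < a i) {f : MvPowerSeries (Fin n) K} (hf : f ≠ 0) :
    coeff (exponent K n r a f) f ≠ 0 := by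
  classical
  let _ : LinearOrder (Fin n →₀ ℕ) := linearOrderOfSTO r
  obtain ⟨hfin, hne⟩ := supp_initialForm_finite_nonempty ha hf
  have hmax : ∃ β ∈ supp K n (initialForm K n a f),
      ∀ γ ∈ supp K n (initialForm K n a f), γ = β ∨ r γ β :=
    Set.exists_max_image _ id hfin hne
  rw [exponent, dif_pos hmax]
  exact ((supp_initialForm a f).subset hmax.choose_spec.1).1

theorem monomial_exponent_mem_leadAlgebra (ha : ∀ i, 0 < a i)
    {A : Set (MvPowerSeries (Fin n) K)} {f : MvPowerSeries (Fin n) K} (hfA : f ∈ A) (hf : f ≠ 0) :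
    monomial (exponent K n r a f) (1 : K) ∈ leadAlgebra K n r a A := by
  have hlead : leadMon K n r a f ∈ leadAlgebra K n r a A :=
    subset_closedAdjoin _ ⟨f, hfA, hf, rfl⟩
  have hc := coeff_exponent_ne_zero (r := r) ha hf
  simpa [leadMon, ← map_smul, hc] using (leadAlgebra K n r a A).smul_mem hlead
    (coeff (exponent K n r a f) f)⁻¹

end LeadingExponent

namespace IsReducedCanonicalBasis

variable {K n} {r : (Fin n →₀ ℕ) → (Fin n →₀ ℕ) → Prop} {a : Fin n → ℝ}
  {A : Subalgebra K (MvPowerSeries (Fin n) K)} {m : ℕ} {g : Fin m → MvPowerSeries (Fin n) K}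

theorem leadMon_eq (hg : IsReducedCanonicalBasis K n r a A g) (i : Fin m) :
    leadMon K n r a (g i) = monomial (exponent K n r a (g i)) (1 : K) := by
  rw [leadMon, hg.2.1 i]

theorem range_leadMon_eq (hg : IsReducedCanonicalBasis K n r a A g) :
    (Set.range fun i => leadMon K n r a (g i)) =
      (monomial · (1 : K)) '' Set.range fun i => exponent K n r a (g i) := by
  rw [← Set.range_comp]
  simp only [Function.comp_def, hg.leadMon_eq]

theorem leadAlgebra_eq (hg : IsReducedCanonicalBasis K n r a A g) :
    leadAlgebra K n r a A =
      closedAdjoin K n ((monomial · (1 : K)) '' Set.range fun i => exponent K n r a (g i)) := by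
  rw [hg.1.1.2, hg.range_leadMon_eq]

theorem mem_closure_exponents_iff (hg : IsReducedCanonicalBasis K n r a A g)
    {γ : Fin n →₀ ℕ} :
    γ ∈ AddSubmonoid.closure (Set.range fun i => exponent K n r a (g i)) ↔
      monomial γ (1 : K) ∈ leadAlgebra K n r a A := by
  rw [hg.leadAlgebra_eq, monomial_one_mem_closedAdjoin_iff]

theorem notMem_closure_exponents_sdiff (hg : IsReducedCanonicalBasis K n r a A g) :
    ∀ β ∈ Set.range (fun i => exponent K n r a (g i)),
      β ∉ AddSubmonoid.closure ((Set.range fun i => exponent K n r a (g i)) \ {β}) := by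
  set B := Set.range fun i => exponent K n r a (g i)
  intro β hβ hgen
  have hclosure : AddSubmonoid.closure (B \ {β}) = AddSubmonoid.closure B := by
    refine le_antisymm (AddSubmonoid.closure_mono Set.sdiff_subset) (AddSubmonoid.closure_le.2 ?_)
    intro γ hγ
    by_cases hγβ : γ = β
    · exact hγβ ▸ hgen
    · exact AddSubmonoid.subset_closure ⟨hγ, hγβ⟩
  refine hg.1.2 ((monomial · (1 : K)) '' (B \ {β})) ?_ ?_
  · rw [hg.range_leadMon_eq, Set.image_sdiff monomial_one_injective, Set.image_singleton]
    exact Set.sdiff_singleton_ssubset.2 ⟨β, hβ, rfl⟩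
  · rw [hg.leadAlgebra_eq]
    exact le_antisymm (closedAdjoin_monomials_le_iff.2 hclosure.le)
      (closedAdjoin_monomials_le_iff.2 hclosure.ge)

theorem coeff_eq_zero_of_monomial_mem (hg : IsReducedCanonicalBasis K n r a A g) {i : Fin m}
    {α : Fin n →₀ ℕ} (hα : α ≠ exponent K n r a (g i))
    (hmem : monomial α (1 : K) ∈ leadAlgebra K n r a A) : coeff α (g i) = 0 := by
  by_contra hne
  refine hg.2.2 i α ?_ (hg.1.1.2 ▸ hmem)
  simpa [supp, hg.leadMon_eq, coeff_monomial, hα] using hne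

end IsReducedCanonicalBasis

section Uniqueness

variable {K n} {r : (Fin n →₀ ℕ) → (Fin n →₀ ℕ) → Prop} {a : Fin n → ℝ}
  {A : Subalgebra K (MvPowerSeries (Fin n) K)} {p q : ℕ}
  {g : Fin p → MvPowerSeries (Fin n) K} {g' : Fin q → MvPowerSeries (Fin n) K}

theorem IsReducedCanonicalBasis.range_exponent_eq (hg : IsReducedCanonicalBasis K n r a A g)
    (hg' : IsReducedCanonicalBasis K n r a A g') :
    (Set.range fun i => exponent K n r a (g i)) = Set.range fun j => exponent K n r a (g' j) := by
  refine eq_of_closure_eq_of_minimal hg.notMem_closure_exponents_sdiff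
    hg'.notMem_closure_exponents_sdiff ?_
  ext γ
  rw [hg.mem_closure_exponents_iff, hg'.mem_closure_exponents_iff]

theorem IsReducedCanonicalBasis.eq_of_exponent_eq [IsStrictTotalOrder (Fin n →₀ ℕ) r]
    (ha : ∀ i, 0 < a i) (hg : IsReducedCanonicalBasis K n r a A g)
    (hg' : IsReducedCanonicalBasis K n r a A g') {i : Fin p} {j : Fin q}
    (hij : exponent K n r a (g i) = exponent K n r a (g' j)) : g i = g' j := by
  by_contra hne
  have hdiff : g i - g' j ≠ 0 := sub_ne_zero.2 hne
  set α := exponent K n r a (g i - g' j)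
  have hmem : monomial α (1 : K) ∈ leadAlgebra K n r a A :=
    monomial_exponent_mem_leadAlgebra ha (sub_mem (hg.1.1.1 i).1 (hg'.1.1.1 j).1) hdiff
  have hcoeff : coeff α (g i - g' j) ≠ 0 := coeff_exponent_ne_zero ha hdiff
  have hα : α ≠ exponent K n r a (g i) := by
    intro h
    rw [h, map_sub, hg.2.1 i, hij, hg'.2.1 j, sub_self] at hcoeff
    exact hcoeff rfl
  rw [map_sub, hg.coeff_eq_zero_of_monomial_mem hα hmem,
    hg'.coeff_eq_zero_of_monomial_mem (hij ▸ hα) hmem, sub_self] at hcoeff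
  exact hcoeff rfl

theorem IsReducedCanonicalBasis.range_subset [IsStrictTotalOrder (Fin n →₀ ℕ) r]
    (ha : ∀ i, 0 < a i) (hg : IsReducedCanonicalBasis K n r a A g)
    (hg' : IsReducedCanonicalBasis K n r a A g') : Set.range g ⊆ Set.range g' := by
  rintro _ ⟨i, rfl⟩
  obtain ⟨j, hj⟩ : exponent K n r a (g i) ∈ Set.range fun j => exponent K n r a (g' j) :=
    hg.range_exponent_eq hg' ▸ ⟨i, rfl⟩
  exact ⟨j, (hg.eq_of_exponent_eq ha hg' hj.symm).symm⟩

end Uniqueness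

theorem reducedCanonicalBasis_unique
    (r : (Fin n →₀ ℕ) → (Fin n →₀ ℕ) → Prop) (hr : IsWellOrder (Fin n →₀ ℕ) r)
    (A : Subalgebra K (MvPowerSeries (Fin n) K))
    (a : Fin n → ℝ) (ha : ∀ i, 0 < a i)
    (p q : ℕ) (g : Fin p → MvPowerSeries (Fin n) K) (g' : Fin q → MvPowerSeries (Fin n) K)
    (hg : IsReducedCanonicalBasis K n r a A g)
    (hg' : IsReducedCanonicalBasis K n r a A g') :
    Set.range g = Set.range g' := by
  have := hr
  exact (hg.range_subset ha hg').antisymm (hg'.range_subset ha hg)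

end CanonicalFan
end
end

section
/- Let K be a field, A = K[[x+y, xy, xy²]] ⊆ F = K[[x,y]], and a = (1,2) ∈ (ℝ_{>0})². Then the additive submonoid {exp(f,a) : f ∈ A∖{0}} ∪ {0} of ℕ² is not finitely generated. (In particular, exp(f,a) = (1,n) is attained for every n ≥ 0, e.g. by x+y, xy, and xy^n for n ≥ 2.) -/
noncomputable section

namespace CanonicalFan

open MvPowerSeries

variable (K : Type*) [Field K] (n : ℕ)

/-! Every element of `A = K[[x+y, xy, xy²]]` has the same coefficient at `x^m` as at `y^m`: this
holds for the three generators, survives sums and products, and passes to the adic closure because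
it constrains one coefficient of each degree at a time. For `a = (1,2)` the monomial `x^m` has
smaller weight than `y^m`, so `(0,m)` is never `exp(f,a)`, and every nonzero element of
`exp(A,a) ∪ {0}` has positive first coordinate. The elements `(1,m)`, attained by `xy^m ∈ A`, are
then not sums of two nonzero elements, so a generating set must contain all of them. -/

open Finsupp

def axisSymmetric (i j : Fin n) : Subalgebra K (MvPowerSeries (Fin n) K) where
  carrier := {f | ∀ m : ℕ, MvPowerSeries.coeff (single i m) f =
      MvPowerSeries.coeff (single j m) f}
  algebraMap_mem' c m := by
    rcases eq_or_ne m 0 with rfl | hm <;>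
      simp [MvPowerSeries.algebraMap_apply, MvPowerSeries.coeff_C, *]
  add_mem' hf hg m := by simp only [map_add, hf m, hg m]
  mul_mem' {f g} hf hg m := by
    simp only [MvPowerSeries.coeff_mul, antidiagonal_single, Finset.sum_map]
    refine Finset.sum_congr rfl fun p _ => ?_
    simp only [Function.Embedding.coe_prodMap, Function.Embedding.coeFn_mk, Prod.map_fst,
      Prod.map_snd, hf p.1, hg p.2]

def exampleAlgebra : Subalgebra K (MvPowerSeries (Fin 2) K) :=
  closedAdjoin K 2 {MvPowerSeries.X 0 + MvPowerSeries.X 1, MvPowerSeries.X 0 * MvPowerSeries.X 1,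
    MvPowerSeries.X 0 * MvPowerSeries.X 1 ^ 2}

section

variable {K n}

theorem le_order_of_mem_mIdeal_pow {f : MvPowerSeries (Fin n) K} {N : ℕ}
    (hf : f ∈ mIdeal K n ^ N) : (N : ℕ∞) ≤ f.order := by
  induction N generalizing f with
  | zero => simp
  | succ N ih =>
    have one_le_order : ∀ g ∈ mIdeal K n, 1 ≤ g.order := by
      intro g hg
      rw [MvPowerSeries.one_le_order_iff_constCoeff_eq_zero]
      refine Submodule.span_induction ?_ (by simp) (fun _ _ _ _ h₁ h₂ => by simp [h₁, h₂])
        (fun c _ _ h => by simp [h]) hg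
      rintro _ ⟨i, rfl⟩
      simp
    rw [pow_succ] at hf
    refine Submodule.mul_induction_on hf (fun p hp q hq => ?_) (fun p q hp hq => ?_)
    · calc ((N + 1 : ℕ) : ℕ∞) = N + 1 := by push_cast; rfl
        _ ≤ p.order + q.order := add_le_add (ih hp) (one_le_order q hq)
        _ ≤ (p * q).order := MvPowerSeries.le_order_mul
    · exact le_trans (le_min hp hq) MvPowerSeries.min_order_le_add

theorem adjoin_le_closedAdjoin (S : Set (MvPowerSeries (Fin n) K)) :
    Algebra.adjoin K S ≤ closedAdjoin K n S :=
  fun f hf _ => ⟨f, hf, by rw [sub_self]; exact zero_mem _⟩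

theorem exists_mem_adjoin_coeff_eq {S : Set (MvPowerSeries (Fin n) K)}
    {f : MvPowerSeries (Fin n) K} (hf : f ∈ closedAdjoin K n S) (N : ℕ) :
    ∃ g ∈ Algebra.adjoin K S, ∀ α : Fin n →₀ ℕ, α.degree < N →
      MvPowerSeries.coeff α f = MvPowerSeries.coeff α g := by
  obtain ⟨g, hg, hfg⟩ := hf N
  refine ⟨g, hg, fun α hα => ?_⟩
  rw [← sub_eq_zero, ← map_sub]
  exact MvPowerSeries.coeff_of_lt_order (lt_of_lt_of_le (by exact_mod_cast hα)
    (le_order_of_mem_mIdeal_pow hfg))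

theorem X_add_X_mem_axisSymmetric (i j : Fin n) :
    MvPowerSeries.X i + MvPowerSeries.X j ∈ axisSymmetric K n i j := by
  intro m
  simp only [map_add, MvPowerSeries.coeff_X, single_eq_single_iff]
  grind

theorem monomial_mem_axisSymmetric {i j : Fin n} (hij : i ≠ j) {α : Fin n →₀ ℕ}
    (hi : α i ≠ 0) (hj : α j ≠ 0) (c : K) :
    MvPowerSeries.monomial α c ∈ axisSymmetric K n i j := by
  intro m
  have hαi : single i m ≠ α := fun h => hj (by rw [← h, single_eq_of_ne hij.symm])
  have hαj : single j m ≠ α := fun h => hi (by rw [← h, single_eq_of_ne hij])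
  rw [MvPowerSeries.coeff_monomial, MvPowerSeries.coeff_monomial, if_neg hαi, if_neg hαj]

theorem closedAdjoin_le_axisSymmetric {S : Set (MvPowerSeries (Fin n) K)} {i j : Fin n}
    (hS : S ⊆ (axisSymmetric K n i j : Set (MvPowerSeries (Fin n) K))) :
    closedAdjoin K n S ≤ axisSymmetric K n i j := by
  intro f hf m
  obtain ⟨g, hg, hfg⟩ := exists_mem_adjoin_coeff_eq hf (m + 1)
  rw [hfg _ (by simp), hfg _ (by simp)]
  exact Algebra.adjoin_le hS hg m

theorem X_mul_X_pow_eq_monomial (i j : Fin n) (k : ℕ) :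
    (MvPowerSeries.X i * MvPowerSeries.X j ^ k : MvPowerSeries (Fin n) K) =
      MvPowerSeries.monomial (single i 1 + single j k) 1 := by
  rw [MvPowerSeries.X_pow_eq, MvPowerSeries.X_def, MvPowerSeries.monomial_mul_monomial, one_mul]

theorem mul_pow_succ_mem_adjoin {R A : Type*} [CommRing R] [CommRing A] [Algebra R A]
    (u v : A) (k : ℕ) : u * v ^ (k + 1) ∈ Algebra.adjoin R {u + v, u * v, u * v ^ 2} := by
  set B := Algebra.adjoin R {u + v, u * v, u * v ^ 2}
  have hsum : u + v ∈ B := Algebra.subset_adjoin (by simp)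
  have hprod : u * v ∈ B := Algebra.subset_adjoin (by simp)
  suffices ∀ k : ℕ, u * v ^ (k + 1) ∈ B ∧ u * v ^ (k + 2) ∈ B from (this k).1
  intro k
  induction k with
  | zero => exact ⟨by rwa [pow_one], Algebra.subset_adjoin (by simp)⟩
  | succ k ih =>
    refine ⟨ih.2, ?_⟩
    have h : u * v ^ (k + 3) = u * v ^ (k + 2) * (u + v) - u * v * (u * v ^ (k + 1)) := by ring
    rw [h]
    exact sub_mem (mul_mem ih.2 hsum) (mul_mem hprod ih.1)

theorem weight_single (a : Fin n → ℝ) (i : Fin n) (m : ℕ) :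
    weight n a (single i m) = a i * m := by
  simp [weight, single_apply]

theorem mem_supp_initialForm_iff {a : Fin n → ℝ} {f : MvPowerSeries (Fin n) K}
    {α : Fin n →₀ ℕ} :
    α ∈ supp K n (initialForm K n a f) ↔
      α ∈ supp K n f ∧ ((weight n a α : ℝ) : EReal) = nu K n a f := by
  simp only [supp, Set.mem_ofPred_eq, MvPowerSeries.coeff_apply, initialForm]
  split_ifs with h <;> simp [h]

theorem nu_le_weight {a : Fin n → ℝ} {f : MvPowerSeries (Fin n) K} {α : Fin n →₀ ℕ}
    (hα : α ∈ supp K n f) : nu K n a f ≤ ((weight n a α : ℝ) : EReal) :=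
  sInf_le (Set.mem_image_of_mem _ hα)

theorem supp_monomial (β : Fin n →₀ ℕ) {c : K} (hc : c ≠ 0) :
    supp K n (MvPowerSeries.monomial β c) = {β} := by
  ext α
  simp [supp, MvPowerSeries.coeff_monomial, hc]

theorem monomial_ne_zero (β : Fin n →₀ ℕ) {c : K} (hc : c ≠ 0) :
    MvPowerSeries.monomial β c ≠ 0 :=
  fun h => hc (by rw [← MvPowerSeries.coeff_monomial_same β c, h, map_zero])

theorem exponent_monomial (r : (Fin n →₀ ℕ) → (Fin n →₀ ℕ) → Prop) (a : Fin n → ℝ)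
    (β : Fin n →₀ ℕ) {c : K} (hc : c ≠ 0) :
    exponent K n r a (MvPowerSeries.monomial β c) = β := by
  have hsupp : supp K n (initialForm K n a (MvPowerSeries.monomial β c)) = {β} := by
    ext α
    rw [mem_supp_initialForm_iff, supp_monomial β hc, nu, supp_monomial β hc]
    simp +contextual
  have hex : ∃ β' ∈ supp K n (initialForm K n a (MvPowerSeries.monomial β c)),
      ∀ γ ∈ supp K n (initialForm K n a (MvPowerSeries.monomial β c)), γ = β' ∨ r γ β' :=
    ⟨β, by simp [hsupp], fun γ hγ => Or.inl (by simpa [hsupp] using hγ)⟩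
  rw [exponent, dif_pos hex]
  simpa [hsupp] using hex.choose_spec.1

theorem exponent_eq_zero_or_mem_supp_initialForm
    (r : (Fin n →₀ ℕ) → (Fin n →₀ ℕ) → Prop) (a : Fin n → ℝ) (f : MvPowerSeries (Fin n) K) :
    exponent K n r a f = 0 ∨ exponent K n r a f ∈ supp K n (initialForm K n a f) := by
  rw [exponent]
  split_ifs with h
  · exact Or.inr h.choose_spec.1
  · exact Or.inl rfl

theorem single_notMem_supp_initialForm {a : Fin n → ℝ} {i j : Fin n} (ha : a i < a j)
    {m : ℕ} (hm : m ≠ 0) {f : MvPowerSeries (Fin n) K}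
    (hf : MvPowerSeries.coeff (single i m) f = MvPowerSeries.coeff (single j m) f) :
    single j m ∉ supp K n (initialForm K n a f) := by
  rw [mem_supp_initialForm_iff]
  rintro ⟨hj, hnu⟩
  have hi : single i m ∈ supp K n f := by rwa [supp, Set.mem_ofPred_eq, hf]
  have hlt : weight n a (single i m) < weight n a (single j m) := by
    rw [weight_single, weight_single]
    exact mul_lt_mul_of_pos_right ha (by positivity)
  have hle : nu K n a f ≤ ((weight n a (single i m) : ℝ) : EReal) := nu_le_weight hi
  rw [← hnu, EReal.coe_le_coe_iff] at hle
  exact hle.not_gt hlt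

theorem exponent_ne_single (r : (Fin n →₀ ℕ) → (Fin n →₀ ℕ) → Prop) {a : Fin n → ℝ}
    {i j : Fin n} (ha : a i < a j) {m : ℕ} (hm : m ≠ 0) {f : MvPowerSeries (Fin n) K}
    (hf : MvPowerSeries.coeff (single i m) f = MvPowerSeries.coeff (single j m) f) :
    exponent K n r a f ≠ single j m := by
  intro h
  rcases exponent_eq_zero_or_mem_supp_initialForm r a f with h0 | hsupp
  · exact hm (single_eq_zero.mp (h ▸ h0))
  · exact single_notMem_supp_initialForm ha hm hf (h ▸ hsupp)

theorem _root_.AddSubmonoid.not_fg_of_infinite_preimage_one {M : Type*} [AddMonoid M]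
    (φ : M →+ ℕ) (S : AddSubmonoid M) (hS : ∀ x ∈ S, φ x = 0 → x = 0)
    (hinf : {x ∈ S | φ x = 1}.Infinite) : ¬ S.FG := by
  rintro ⟨T, rfl⟩
  refine hinf (T.finite_toSet.subset ?_)
  rintro x ⟨hxS, hx⟩
  induction hxS using AddSubmonoid.closure_induction with
  | mem y hy => exact hy
  | zero => simp at hx
  | add y z hy hz ihy ihz =>
    rw [map_add] at hx
    rcases Nat.add_eq_one_iff.mp hx with ⟨hy0, hz1⟩ | ⟨hy1, hz0⟩
    · rw [hS y hy hy0, zero_add]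
      exact ihz hz1
    · rw [hS z hz hz0, add_zero]
      exact ihy hy1

theorem exampleAlgebra_le_axisSymmetric : exampleAlgebra K ≤ axisSymmetric K 2 0 1 := by
  refine closedAdjoin_le_axisSymmetric ?_
  rintro _ (rfl | rfl | rfl)
  · exact X_add_X_mem_axisSymmetric 0 1
  · rw [← pow_one (MvPowerSeries.X 1), X_mul_X_pow_eq_monomial]
    exact monomial_mem_axisSymmetric (by decide) (by simp) (by simp) 1
  · rw [X_mul_X_pow_eq_monomial]
    exact monomial_mem_axisSymmetric (by decide) (by simp) (by simp) 1

theorem apply_zero_ne_zero_of_mem_expSet (r : (Fin 2 →₀ ℕ) → (Fin 2 →₀ ℕ) → Prop)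
    {β : Fin 2 →₀ ℕ}
    (hβ : β ∈ expSet K 2 r ![(1 : ℝ), 2] (exampleAlgebra K : Set (MvPowerSeries (Fin 2) K)))
    (hne : β ≠ 0) : β 0 ≠ 0 := by
  obtain ⟨f, hf, -, rfl⟩ := hβ
  intro h0
  have hsingle : exponent K 2 r ![1, 2] f = single 1 (exponent K 2 r ![1, 2] f 1) := by
    ext i
    fin_cases i <;> simp [h0]
  refine exponent_ne_single r (i := 0) (by norm_num) (fun hm => hne ?_)
    (exampleAlgebra_le_axisSymmetric hf _) hsingle
  rw [hsingle, hm, single_zero]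

theorem single_add_single_mem_expSet (r : (Fin 2 →₀ ℕ) → (Fin 2 →₀ ℕ) → Prop) (k : ℕ) :
    single 0 1 + single 1 (k + 1) ∈
      expSet K 2 r ![(1 : ℝ), 2] (exampleAlgebra K : Set (MvPowerSeries (Fin 2) K)) := by
  refine ⟨MvPowerSeries.monomial (single 0 1 + single 1 (k + 1)) 1, ?_,
    monomial_ne_zero _ one_ne_zero, exponent_monomial r _ _ one_ne_zero⟩
  rw [← X_mul_X_pow_eq_monomial]
  exact adjoin_le_closedAdjoin _ (mul_pow_succ_mem_adjoin _ _ k)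

end

/-- for `A = K[[x+y, xy, xy²]]` and `a = (1,2)`, the additive monoid
`exp(A,a) ∪ {0}` is not finitely generated. -/
theorem expSet_not_fg
    (r : (Fin 2 →₀ ℕ) → (Fin 2 →₀ ℕ) → Prop) (hr : IsWellOrder (Fin 2 →₀ ℕ) r)
    (hradd : ∀ α β γ : Fin 2 →₀ ℕ, r α β → r (α + γ) (β + γ)) :
    ∀ S : AddSubmonoid (Fin 2 →₀ ℕ),
      (S : Set (Fin 2 →₀ ℕ)) =
        expSet K 2 r ![(1 : ℝ), 2]
          ((closedAdjoin K 2 {MvPowerSeries.X 0 + MvPowerSeries.X 1,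
            MvPowerSeries.X 0 * MvPowerSeries.X 1,
            MvPowerSeries.X 0 * MvPowerSeries.X 1 ^ 2} :
              Subalgebra K (MvPowerSeries (Fin 2) K)) :
            Set (MvPowerSeries (Fin 2) K)) ∪ {0} →
      ¬ S.FG := by
  intro S hS
  refine AddSubmonoid.not_fg_of_infinite_preimage_one (applyAddHom 0) S ?_ ?_
  · intro β hβ h0
    rw [← SetLike.mem_coe, hS] at hβ
    rcases hβ with hβ | hβ
    · by_contra hne
      exact apply_zero_ne_zero_of_mem_expSet r hβ hne h0
    · exact hβ
  · have hinj : Function.Injective fun k : ℕ => single (0 : Fin 2) 1 + single 1 (k + 1) := by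
      intro k l h
      simpa using DFunLike.congr_fun h 1
    refine Set.infinite_of_injective_forall_mem hinj fun k => ⟨?_, by simp⟩
    rw [← SetLike.mem_coe, hS]
    exact Or.inl (single_add_single_mem_expSet r k)

end CanonicalFan
end
end
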